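/- The leximin extension of a linear order on candidates satisfies fixed-cardinality responsiveness: if X ⪰_lmin Y for k-element sets X, Y and Z is disjoint from X and Y, then X ∪ Z ⪰_lmin Y ∪ Z. -/

import Mathlib

/-- The increasing list of the elements of a finite set (worst element first). -/
def ascList {C : Type*} [LinearOrder C] (X : Finset C) : List C :=
  X.sort (· ≤ ·)

/-- Leximin comparison of committees: either the increasing (worst-first) lists
agree, or at the first index (starting from the worst element) where they
differ, the element of `X` is preferred. -/
def leximin {C : Type*} [LinearOrder C] (X Y : Finset C) : Prop :=
  ascList X = ascList Y ∨ List.Lex (· < ·) (ascList Y) (ascList X)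

/-! Adding a common element to two sorted worst-first lists inserts it at its place in both. A
strict lexicographic comparison between lists of equal length survives this: if the new element
precedes the first difference in both lists it merely shifts that difference, and otherwise the
decisive position still favours the same list. (Equal length excludes the proper-prefix case,
which an insertion can reverse.) Responsiveness follows by adding `Z` one element at a time. -/

theorem Finset.sort_insert_eq_orderedInsert {α : Type*} [DecidableEq α]
    (r : α → α → Prop) [DecidableRel r] [IsTrans α r] [Std.Antisymm r] [Std.Total r]
    {a : α} {s : Finset α} (ha : a ∉ s) :
    (insert a s).sort r = (s.sort r).orderedInsert r a := by
  refine List.Perm.eq_of_pairwise' (pairwise_sort _ _) ((pairwise_sort _ _).orderedInsert _ _) ?_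
  refine (Multiset.coe_eq_coe.mp ?_).trans (List.perm_orderedInsert r a _).symm
  rw [sort_eq, insert_val_of_notMem ha, ← Multiset.cons_coe, sort_eq]

theorem List.Lex.orderedInsert {α : Type*} [LinearOrder α] (z : α) {l₁ l₂ : List α}
    (hlen : l₁.length = l₂.length) (h : List.Lex (· < ·) l₁ l₂) :
    List.Lex (· < ·) (l₁.orderedInsert (· ≤ ·) z) (l₂.orderedInsert (· ≤ ·) z) := by
  induction h with
  | nil => simp at hlen
  | @rel a l₁ b l₂ hab =>
    by_cases hza : z ≤ a
    · simpa [hza, hza.trans hab.le] using List.Lex.rel hab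
    · by_cases hzb : z ≤ b
      · simpa [hza, hzb] using List.Lex.rel (lt_of_not_ge hza)
      · simpa [hza, hzb] using List.Lex.rel hab
  | @cons a l₁ l₂ h ih =>
    by_cases hza : z ≤ a
    · simpa [hza] using (h.cons (a := a)).cons (a := z)
    · simpa [hza] using (ih (by simpa using hlen)).cons (a := a)

theorem ascList_insert {C : Type*} [LinearOrder C] {z : C} {X : Finset C} (hz : z ∉ X) :
    ascList (insert z X) = (ascList X).orderedInsert (· ≤ ·) z :=
  Finset.sort_insert_eq_orderedInsert _ hz

theorem leximin_insert {C : Type*} [LinearOrder C] {z : C} {X Y : Finset C}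
    (hcard : X.card = Y.card) (hzX : z ∉ X) (hzY : z ∉ Y) (h : leximin X Y) :
    leximin (insert z X) (insert z Y) := by
  rw [leximin, ascList_insert hzX, ascList_insert hzY]
  rcases h with heq | hlex
  · exact .inl (heq ▸ rfl)
  · exact .inr (hlex.orderedInsert z (by simp [ascList, hcard]))

/-- The leximin set extension satisfies fixed-cardinality responsiveness. -/
theorem stmt_3 {C : Type*} [LinearOrder C] (k : ℕ) (X Y Z : Finset C)
    (hX : X.card = k) (hY : Y.card = k)
    (hZX : Disjoint Z X) (hZY : Disjoint Z Y)
    (h : leximin X Y) :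
    leximin (X ∪ Z) (Y ∪ Z) := by
  induction Z using Finset.induction_on with
  | empty => simpa using h
  | @insert z Z hzZ ih =>
    rw [Finset.disjoint_insert_left] at hZX hZY
    rw [Finset.union_insert, Finset.union_insert]
    refine leximin_insert ?_ (by simp [hZX.1, hzZ]) (by simp [hZY.1, hzZ]) (ih hZX.2 hZY.2)
    rw [Finset.card_union_of_disjoint hZX.2.symm, Finset.card_union_of_disjoint hZY.2.symm, hX, hY]
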